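/- Let U ⊆ S^m_d be a quasi-stable monomial module and G a P(U)-marked set. Then for every degree s the A-module (S^m_d)_s decomposes as a direct sum (S^m_d)_s = ⟨G^{(s)}⟩^A ⊕ ⟨N(U)_s⟩^A. -/

import Mathlib

/-!
Every term `x^γ e_k` of `U` is uniquely `x^δ x^α e_k` with `x^α e_k ∈ P(U)` and `x^δ`
multiplicative for `x^α`. Replacing it by `x^δ f_α^k` trades it for terms `x^(δ+β) e_l` with
`x^β e_l ∈ N(U)`; when such a term is again in a Pommaret cone `x^δ' x^α' e_l`, then `δ'` is
lexicographically smaller than `δ`, so this rewriting terminates and `(S^m_d)_s` is the sum.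
By the same comparison, in a nonzero `A`-combination of `G^(s)` the element with the largest
multiplier `x^δ` is the only one contributing to its head term, which lies in `U`; hence the
combination is not in `⟨N(U)_s⟩^A`.
-/

open MvPolynomial

namespace MB

/-- Exponent (multi-index) of a term in the variables `x_0, …, x_n`. -/
abbrev Exp (n : ℕ) := Fin (n+1) →₀ ℕ

variable {n : ℕ}

/-- Total degree of a term. -/
def degE (α : Exp n) : ℕ := α.sum fun _ e => e

/-- `x_i` is a multiplicative variable for the term `x^α`, i.e. `x_i ≤ min(x^α)`. -/
def mult (α : Exp n) (i : Fin (n+1)) : Prop := ∀ j ∈ α.support, i ≤ j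

/-- Every variable occurring in `x^δ` is multiplicative for `x^α`. -/
def multExp (α δ : Exp n) : Prop := ∀ i ∈ δ.support, mult α i

/-- Pommaret cone of a term. -/
def pommaretCone (α : Exp n) : Set (Exp n) := {γ | ∃ δ, multExp α δ ∧ γ = α + δ}

/-- A set of terms is (the set of terms of) a monomial ideal. -/
def IsMonomialIdeal (T : Set (Exp n)) : Prop := ∀ α ∈ T, ∀ β, α + β ∈ T

/-- `P` is a Pommaret basis of the set of terms `T`: the terms of `T` are the
disjoint union of the Pommaret cones of the elements of `P`. -/
def IsPommaretBasis (P : Finset (Exp n)) (T : Set (Exp n)) : Prop :=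
  (∀ γ, γ ∈ T ↔ ∃ α ∈ P, γ ∈ pommaretCone α) ∧
  ∀ γ : Exp n, ∀ α ∈ P, ∀ β ∈ P, γ ∈ pommaretCone α → γ ∈ pommaretCone β → α = β

/-- Lexicographic order on terms (with `x_n > … > x_0` significance). -/
def lexLt (η δ : Exp n) : Prop := ∃ i, η i < δ i ∧ ∀ j, i < j → η j = δ j

/-- Terms of the saturation `(J : (x_0,…,x_n)^∞)` of a monomial ideal. -/
def satTerms (T : Set (Exp n)) : Set (Exp n) :=
  {α | ∃ j : ℕ, ∀ β : Exp n, degE β = j → α + β ∈ T}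

section ModuleDefs

variable (A : Type*) [CommRing A] {κ : Type*} [Fintype κ] [DecidableEq κ]

/-- The term `x^α e_k` of the free module. -/
noncomputable def termV (α : Exp n) (k : κ) : κ → MvPolynomial (Fin (n+1)) A :=
  Pi.single k (monomial α 1)

variable {A}

/-- Homogeneity of degree `s` in `S^m_d` (with weight vector `d`). -/
def IsHomogV (d : κ → ℤ) (f : κ → MvPolynomial (Fin (n+1)) A) (s : ℤ) : Prop :=
  ∀ k, ∀ β ∈ (f k).support, (degE β : ℤ) + d k = s

variable (A)

/-- The degree-`s` component `(S^m_d)_s` as an `A`-submodule. -/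
noncomputable def homogCompV (d : κ → ℤ) (s : ℤ) :
    Submodule A (κ → MvPolynomial (Fin (n+1)) A) where
  carrier := {f | IsHomogV d f s}
  add_mem' := by
    intro f g hf hg k β hβ
    rcases Finset.mem_union.mp (MvPolynomial.support_add hβ) with h | h
    · exact hf k β h
    · exact hg k β h
  zero_mem' := by intro k β hβ; simp at hβ
  smul_mem' := by
    intro a f hf k β hβ
    exact hf k β (MvPolynomial.support_smul hβ)

/-- The set `N(U)` of terms of `S^m_d` not belonging to the monomial module `U = ⊕ J^(k) e_k`. -/
def NUTerms (J : κ → Set (Exp n)) : Set (κ → MvPolynomial (Fin (n+1)) A) :=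
  {v | ∃ k, ∃ α, α ∉ J k ∧ v = termV A α k}

/-- The degree-`s` part `N(U)_s`. -/
def NUTermsDeg (d : κ → ℤ) (J : κ → Set (Exp n)) (s : ℤ) :
    Set (κ → MvPolynomial (Fin (n+1)) A) :=
  {v | ∃ k, ∃ α, α ∉ J k ∧ (degE α : ℤ) + d k = s ∧ v = termV A α k}

variable {A}

/-- A `P(U)`-marked set: for each `x^α e_k` with `α ∈ P k`, the element `g α k` has
head term `x^α e_k` (coefficient `1`) and all other terms in `N(U)` of the same degree. -/
def IsMarkedSetV (d : κ → ℤ) (J : κ → Set (Exp n)) (P : κ → Finset (Exp n))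
    (g : Exp n → κ → (κ → MvPolynomial (Fin (n+1)) A)) : Prop :=
  ∀ k, ∀ α ∈ P k, ∀ l, ∀ β ∈ ((g α k - termV A α k) l).support,
    β ∉ J l ∧ (degE β : ℤ) + d l = (degE α : ℤ) + d k

/-- The underlying set of elements of the marked set `G`. -/
def GSet (P : κ → Finset (Exp n)) (g : Exp n → κ → (κ → MvPolynomial (Fin (n+1)) A)) :
    Set (κ → MvPolynomial (Fin (n+1)) A) :=
  {v | ∃ k, ∃ α ∈ P k, v = g α k}

/-- The set `G^(s)` of multiplicative multiples of elements of `G` of degree `s`. -/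
def GSdeg (d : κ → ℤ) (P : κ → Finset (Exp n))
    (g : Exp n → κ → (κ → MvPolynomial (Fin (n+1)) A)) (s : ℤ) :
    Set (κ → MvPolynomial (Fin (n+1)) A) :=
  {v | ∃ k, ∃ α ∈ P k, ∃ δ : Exp n, multExp α δ ∧
    (degE δ : ℤ) + (degE α : ℤ) + d k = s ∧ v = (monomial δ (1:A)) • g α k}

/-- The `S`-submodule `⟨G⟩` generated by the marked set. -/
noncomputable def GmodS (P : κ → Finset (Exp n))
    (g : Exp n → κ → (κ → MvPolynomial (Fin (n+1)) A)) :
    Submodule (MvPolynomial (Fin (n+1)) A) (κ → MvPolynomial (Fin (n+1)) A) :=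
  Submodule.span _ (GSet P g)

/-- The degree-`s` component `⟨G⟩_s` as an `A`-submodule. -/
noncomputable def GmodDeg (d : κ → ℤ) (P : κ → Finset (Exp n))
    (g : Exp n → κ → (κ → MvPolynomial (Fin (n+1)) A)) (s : ℤ) :
    Submodule A (κ → MvPolynomial (Fin (n+1)) A) :=
  (GmodS P g).restrictScalars A ⊓ homogCompV A d s

/-- `G` is a marked basis: `(S^m_d)_s = ⟨G⟩_s ⊕ ⟨N(U)_s⟩^A` for every degree `s`. -/
def MarkedBasisProp (d : κ → ℤ) (J : κ → Set (Exp n)) (P : κ → Finset (Exp n))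
    (g : Exp n → κ → (κ → MvPolynomial (Fin (n+1)) A)) : Prop :=
  ∀ s : ℤ,
    homogCompV A d s = GmodDeg d P g s ⊔ Submodule.span A (NUTermsDeg A d J s) ∧
    GmodDeg d P g s ⊓ Submodule.span A (NUTermsDeg A d J s) = ⊥

/-- One step of the reduction relation `→_G`. -/
def RedStep (P : κ → Finset (Exp n)) (g : Exp n → κ → (κ → MvPolynomial (Fin (n+1)) A))
    (h h' : κ → MvPolynomial (Fin (n+1)) A) : Prop :=
  ∃ k, ∃ α ∈ P k, ∃ η : Exp n, multExp α η ∧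
    (h k).coeff (η + α) ≠ 0 ∧
    h' = h - ((h k).coeff (η + α)) • ((monomial η (1:A)) • g α k)

end ModuleDefs

section IdealDefs

variable {A : Type*} [CommRing A]

/-- A `P(J)`-marked set of polynomials. -/
def IsMarkedSetI (T : Set (Exp n)) (P : Finset (Exp n))
    (g : Exp n → MvPolynomial (Fin (n+1)) A) : Prop :=
  ∀ α ∈ P, ∀ β ∈ (g α - monomial α (1:A)).support, β ∉ T ∧ degE β = degE α

variable (A)

/-- The degree-`s` monomials not in `T`. -/
def NTermsDegI (T : Set (Exp n)) (s : ℕ) : Set (MvPolynomial (Fin (n+1)) A) :=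
  {p | ∃ β, β ∉ T ∧ degE β = s ∧ p = monomial β (1:A)}

variable {A}

/-- Degree-`s` part of the ideal generated by the marked set. -/
noncomputable def IdealDegI (P : Finset (Exp n)) (g : Exp n → MvPolynomial (Fin (n+1)) A)
    (s : ℕ) : Submodule A (MvPolynomial (Fin (n+1)) A) :=
  (Ideal.span (g '' ↑P)).restrictScalars A ⊓ homogeneousSubmodule (Fin (n+1)) A s

/-- A `P(J)`-marked basis of polynomials: `S_s = (G)_s ⊕ ⟨N(J)_s⟩^A` for all `s`. -/
def IsMarkedBasisI (T : Set (Exp n)) (P : Finset (Exp n))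
    (g : Exp n → MvPolynomial (Fin (n+1)) A) : Prop :=
  IsMarkedSetI T P g ∧ ∀ s : ℕ,
    homogeneousSubmodule (Fin (n+1)) A s
      = IdealDegI P g s ⊔ Submodule.span A (NTermsDegI A T s) ∧
    IdealDegI P g s ⊓ Submodule.span A (NTermsDegI A T s) = ⊥

/-- The polynomial `p` involves only multiplicative variables of `x^α`. -/
def multPoly (α : Exp n) (p : MvPolynomial (Fin (n+1)) A) : Prop :=
  ∀ β ∈ p.support, multExp α β

end IdealDefs

section SyzDefs

variable {A : Type*} [CommRing A]

/-- The map `(c_l) ↦ Σ_l c_l f_{α(l)}` whose kernel is `Syz(G)`. -/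
noncomputable def syzMap (P : Finset (Exp n)) (g : Exp n → MvPolynomial (Fin (n+1)) A) :
    (↥P → MvPolynomial (Fin (n+1)) A) →ₗ[MvPolynomial (Fin (n+1)) A]
      MvPolynomial (Fin (n+1)) A where
  toFun c := ∑ l : ↥P, c l * g l.1
  map_add' c c' := by simp [add_mul, Finset.sum_add_distrib]
  map_smul' a c := by simp [Finset.mul_sum, mul_assoc]

/-- Weight vector for the syzygy module: `d_l = deg x^{α(l)}`. -/
def ddeg (P : Finset (Exp n)) : ↥P → ℤ := fun l => (degE l.1 : ℤ)

/-- Terms of the monomial ideal generated by the nonmultiplicative variables of `x^{α(l)}`. -/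
def Jsyz (P : Finset (Exp n)) : ↥P → Set (Exp n) :=
  fun l => {β | ∃ i ∈ β.support, ¬ mult (l : Exp n) i}

open Classical in
/-- The claimed Pommaret basis `{x_i e_l : x_i nonmultiplicative for x^{α(l)}}`. -/
noncomputable def Psyz (P : Finset (Exp n)) : ↥P → Finset (Exp n) := fun l =>
  (Finset.univ.filter fun i : Fin (n+1) => ¬ mult (l : Exp n) i).image
    fun i => Finsupp.single i 1

open Classical in
/-- The syzygy `S_{k;i} = x_i e_k − Σ_l P_l^{k;i} e_l`. -/
noncomputable def Ssyz (P : Finset (Exp n))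
    (Pc : ↥P → Fin (n+1) → ↥P → MvPolynomial (Fin (n+1)) A)
    (k : ↥P) (i : Fin (n+1)) : ↥P → MvPolynomial (Fin (n+1)) A :=
  fun l => (if l = k then (X i : MvPolynomial (Fin (n+1)) A) else 0) - Pc k i l

/-- The set `G_Syz^(s)`. -/
def GSyzDeg (P : Finset (Exp n))
    (Pc : ↥P → Fin (n+1) → ↥P → MvPolynomial (Fin (n+1)) A) (s : ℤ) :
    Set (↥P → MvPolynomial (Fin (n+1)) A) :=
  {v | ∃ k : ↥P, ∃ i : Fin (n+1), ¬ mult (k : Exp n) i ∧ ∃ δ : Exp n,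
    (∀ j ∈ δ.support, j ≤ i) ∧ (degE δ : ℤ) + 1 + ddeg P k = s ∧
    v = (monomial δ (1:A)) • Ssyz P Pc k i}

end SyzDefs

section Exponents

variable {n : ℕ}

lemma degE_add (α β : Exp n) : degE (α + β) = degE α + degE β :=
  map_add Finsupp.degree α β

lemma lexLt_iff_toColex_lt {η δ : Exp n} : lexLt η δ ↔ toColex η < toColex δ := by
  simp only [lexLt, Finsupp.Colex.lt_iff, and_comm]
  rfl

lemma wellFounded_lexLt : WellFounded (@lexLt n) :=
  Subrelation.wf lexLt_iff_toColex_lt.mp (InvImage.wf toColex wellFounded_lt)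

lemma IsPommaretBasis.lexLt_of_add_eq {J : Set (Exp n)} {P : Finset (Exp n)}
    (hPB : IsPommaretBasis P J) {β δ α' δ' : Exp n} (hβ : β ∉ J) (hα' : α' ∈ P)
    (hδ' : multExp α' δ') (heq : δ + β = α' + δ') : lexLt δ' δ := by
  have hcomp : ∀ j, δ j + β j = α' j + δ' j := fun j => by
    simpa using DFunLike.congr_fun heq j
  -- If `δ ≤ δ'`, then at the last variable `x_i` where they differ, `x_i` is multiplicative for
  -- `x^α'`, and `x^β` itself lies in the cone of `x^α'`.
  by_contra hlex
  rw [lexLt_iff_toColex_lt, not_lt, le_iff_eq_or_lt, ← lexLt_iff_toColex_lt] at hlex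
  rcases hlex with hδδ' | ⟨i, hi, hup⟩
  · refine hβ ((hPB.1 β).mpr ⟨α', hα', 0, fun i hi => by simp at hi, ?_⟩)
    have : δ + β = δ + α' := by rw [heq, toColex_inj.mp hδδ', add_comm]
    rw [add_left_cancel this, add_zero]
  · have hα'i : ∀ t ∈ α'.support, i ≤ t := hδ' i (Finsupp.mem_support_iff.mpr (by omega))
    have hle : α' ≤ β := fun j => by
      rcases lt_trichotomy j i with hji | rfl | hji
      · by_cases hj : j ∈ α'.support
        · exact absurd (hα'i j hj) (not_le.mpr hji)
        · simp [Finsupp.notMem_support_iff.mp hj]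
      · have := hcomp j; omega
      · have := hup j hji; have := hcomp j; omega
    refine hβ ((hPB.1 β).mpr ⟨α', hα', β - α', fun j hj => ?_, (add_tsub_cancel_of_le hle).symm⟩)
    refine fun t ht => le_trans (not_lt.mp fun hij => ?_) (hα'i t ht)
    have := hup j hij
    have := hcomp j
    exact (Finsupp.mem_support_iff.mp hj) (by rw [Finsupp.tsub_apply]; omega)

end Exponents

section Module

variable {n : ℕ} {A : Type*} [CommRing A]

lemma exists_eq_add_of_mem_support_monomial_mul {δ γ : Exp n} {p : MvPolynomial (Fin (n+1)) A}
    (hγ : γ ∈ (monomial δ (1 : A) * p).support) : ∃ β ∈ p.support, γ = δ + β := by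
  rw [mem_support_iff, coeff_monomial_mul'] at hγ
  split_ifs at hγ with hle
  · exact ⟨γ - δ, mem_support_iff.mpr (by simpa using hγ), (add_tsub_cancel_of_le hle).symm⟩
  · exact absurd rfl hγ

variable {κ : Type*} {d : κ → ℤ} {s : ℤ}

lemma monomial_smul_mem_homogCompV (δ : Exp n) {f : κ → MvPolynomial (Fin (n+1)) A}
    (hf : f ∈ homogCompV A d s) : monomial δ (1 : A) • f ∈ homogCompV A d (degE δ + s) := by
  intro l γ hγ
  obtain ⟨β, hβ, rfl⟩ := exists_eq_add_of_mem_support_monomial_mul hγ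
  rw [degE_add, Nat.cast_add, add_assoc, hf l β hβ]

variable [DecidableEq κ]

lemma termV_apply (α : Exp n) (k l : κ) :
    termV A α k l = if l = k then monomial α 1 else 0 :=
  Pi.single_apply k _ l

lemma coeff_termV (α γ : Exp n) (k l : κ) :
    (termV A α k l).coeff γ = if l = k ∧ α = γ then 1 else 0 := by
  rw [termV_apply]
  split_ifs <;> simp_all [coeff_monomial]

lemma monomial_smul_termV (δ α : Exp n) (k : κ) :
    monomial δ (1 : A) • termV A α k = termV A (δ + α) k := by
  funext l
  simp only [Pi.smul_apply, smul_eq_mul, termV_apply]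
  split_ifs <;> simp [monomial_mul]

lemma termV_mem_homogCompV {γ : Exp n} {k : κ} (h : (degE γ : ℤ) + d k = s) :
    termV A γ k ∈ homogCompV A d s := by
  intro l β hβ
  rw [mem_support_iff, coeff_termV] at hβ
  obtain ⟨rfl, rfl⟩ := (ite_ne_right_iff.mp hβ).1
  exact h

lemma mem_of_forall_termV_mem [Fintype κ] {M : Submodule A (κ → MvPolynomial (Fin (n+1)) A)}
    {f : κ → MvPolynomial (Fin (n+1)) A} (h : ∀ l, ∀ γ ∈ (f l).support, termV A γ l ∈ M) :
    f ∈ M := by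
  have hf : f = ∑ l, ∑ γ ∈ (f l).support, (f l).coeff γ • termV A γ l := by
    ext l γ
    simp only [Finset.sum_apply, coeff_sum, Pi.smul_apply, coeff_smul, coeff_termV, smul_eq_mul]
    simp [ite_and, Finset.sum_ite_eq, Finset.sum_ite_eq']
  rw [hf]
  exact Submodule.sum_mem _ fun l _ => Submodule.sum_mem _ fun γ hγ =>
    Submodule.smul_mem _ _ (h l γ hγ)

variable {J : κ → Set (Exp n)} {P : κ → Finset (Exp n)}
  {g : Exp n → κ → (κ → MvPolynomial (Fin (n+1)) A)}

lemma IsMarkedSetV.mem_homogCompV (hG : IsMarkedSetV d J P g) {α : Exp n} {k : κ}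
    (hα : α ∈ P k) : g α k ∈ homogCompV A d (degE α + d k) := by
  rw [← add_sub_cancel (termV A α k) (g α k)]
  exact add_mem (termV_mem_homogCompV rfl) fun l β hβ => (hG k α hα l β hβ).2

lemma IsMarkedSetV.exists_of_mem_support_tail (hG : IsMarkedSetV d J P g) {α δ γ : Exp n}
    {k l : κ} (hα : α ∈ P k)
    (hγ : γ ∈ ((monomial δ (1 : A) • (g α k - termV A α k)) l).support) :
    ∃ β, β ∉ J l ∧ (degE β : ℤ) + d l = degE α + d k ∧ γ = δ + β := by
  obtain ⟨β, hβ, rfl⟩ := exists_eq_add_of_mem_support_monomial_mul hγ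
  exact ⟨β, (hG k α hα l β hβ).1, (hG k α hα l β hβ).2, rfl⟩

lemma IsMarkedSetV.lexLt_of_mem_support_tail (hPB : ∀ k, IsPommaretBasis (P k) (J k))
    (hG : IsMarkedSetV d J P g) {α δ α' δ' : Exp n} {k l : κ} (hα : α ∈ P k)
    (hα' : α' ∈ P l) (hδ' : multExp α' δ')
    (hγ : α' + δ' ∈ ((monomial δ (1 : A) • (g α k - termV A α k)) l).support) :
    lexLt δ' δ := by
  obtain ⟨β, hβ, -, heq⟩ := hG.exists_of_mem_support_tail hα hγ
  exact (hPB l).lexLt_of_add_eq hβ hα' hδ' heq.symm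

lemma monomial_smul_eq_termV_add_tail (δ α : Exp n) (k : κ) :
    monomial δ (1 : A) • g α k
      = termV A (δ + α) k + monomial δ (1 : A) • (g α k - termV A α k) := by
  rw [smul_sub, monomial_smul_termV, add_sub_cancel]

end Module

section Decomposition

variable {n : ℕ} {A : Type*} [CommRing A] {κ : Type*} {d : κ → ℤ} {s : ℤ}
  {J : κ → Set (Exp n)} {P : κ → Finset (Exp n)} {g : Exp n → κ → (κ → MvPolynomial (Fin (n+1)) A)}

lemma GSdeg_eq_image : GSdeg d P g s
    = (fun t : κ × Exp n × Exp n => monomial t.2.2 (1 : A) • g t.2.1 t.1) ''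
      {t | t.2.1 ∈ P t.1 ∧ multExp t.2.1 t.2.2 ∧ (degE t.2.2 : ℤ) + degE t.2.1 + d t.1 = s} := by
  ext v
  constructor
  · rintro ⟨k, α, hα, δ, hδ, hdeg, rfl⟩
    exact ⟨(k, α, δ), ⟨hα, hδ, hdeg⟩, rfl⟩
  · rintro ⟨⟨k, α, δ⟩, ⟨hα, hδ, hdeg⟩, rfl⟩
    exact ⟨k, α, hα, δ, hδ, hdeg, rfl⟩

variable [DecidableEq κ]

lemma span_GSdeg_sup_span_NUTermsDeg_le (hG : IsMarkedSetV d J P g) :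
    Submodule.span A (GSdeg d P g s) ⊔ Submodule.span A (NUTermsDeg A d J s)
      ≤ homogCompV A d s := by
  refine sup_le (Submodule.span_le.mpr ?_) (Submodule.span_le.mpr ?_)
  · rintro _ ⟨k, α, hα, δ, -, hdeg, rfl⟩
    have := monomial_smul_mem_homogCompV δ (hG.mem_homogCompV hα)
    rwa [← add_assoc, hdeg] at this
  · rintro _ ⟨k, β, -, hdeg, rfl⟩
    exact termV_mem_homogCompV hdeg

lemma termV_mem_span_GSdeg_sup [Fintype κ] (hPB : ∀ k, IsPommaretBasis (P k) (J k))
    (hG : IsMarkedSetV d J P g) {k : κ} {α δ : Exp n} (hα : α ∈ P k) (hδ : multExp α δ)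
    (hdeg : (degE δ : ℤ) + degE α + d k = s) :
    termV A (α + δ) k ∈
      Submodule.span A (GSdeg d P g s) ⊔ Submodule.span A (NUTermsDeg A d J s) := by
  induction δ using wellFounded_lexLt.induction generalizing k α with
  | _ δ ih =>
  have hsplit : termV A (α + δ) k
      = monomial δ (1 : A) • g α k - monomial δ (1 : A) • (g α k - termV A α k) := by
    rw [monomial_smul_eq_termV_add_tail, add_comm α, add_sub_cancel_right]
  rw [hsplit]
  refine sub_mem (Submodule.mem_sup_left (Submodule.subset_span ⟨k, α, hα, δ, hδ, hdeg, rfl⟩))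
    (mem_of_forall_termV_mem fun l γ hγ => ?_)
  obtain ⟨β, -, hβdeg, rfl⟩ := hG.exists_of_mem_support_tail hα hγ
  have hγdeg : (degE (δ + β) : ℤ) + d l = s := by rw [degE_add]; push_cast; linarith
  by_cases hJ : δ + β ∈ J l
  · obtain ⟨α', hα', δ', hδ', hdec⟩ := ((hPB l).1 _).mp hJ
    rw [hdec] at hγ hγdeg ⊢
    refine ih δ' (hG.lexLt_of_mem_support_tail hPB hα hα' hδ' hγ) hα' hδ' ?_
    rw [degE_add] at hγdeg; push_cast at hγdeg; linarith
  · exact Submodule.mem_sup_right (Submodule.subset_span ⟨l, δ + β, hJ, hγdeg, rfl⟩)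

lemma homogCompV_le_span_GSdeg_sup [Fintype κ] (hPB : ∀ k, IsPommaretBasis (P k) (J k))
    (hG : IsMarkedSetV d J P g) :
    homogCompV A d s
      ≤ Submodule.span A (GSdeg d P g s) ⊔ Submodule.span A (NUTermsDeg A d J s) := by
  refine fun f hf => mem_of_forall_termV_mem fun l γ hγ => ?_
  by_cases hJ : γ ∈ J l
  · obtain ⟨α, hα, δ, hδ, rfl⟩ := ((hPB l).1 γ).mp hJ
    refine termV_mem_span_GSdeg_sup hPB hG hα hδ ?_
    have := hf l _ hγ
    rw [degE_add] at this; push_cast at this; linarith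
  · exact Submodule.mem_sup_right (Submodule.subset_span ⟨l, γ, hJ, hf l γ hγ, rfl⟩)

lemma coeff_eq_zero_of_mem_span_NUTermsDeg {x : κ → MvPolynomial (Fin (n+1)) A}
    (hx : x ∈ Submodule.span A (NUTermsDeg A d J s)) {l : κ} {γ : Exp n} (hγ : γ ∈ J l) :
    (x l).coeff γ = 0 := by
  induction hx using Submodule.span_induction with
  | mem _ h =>
    obtain ⟨k, β, hβ, -, rfl⟩ := h
    rw [coeff_termV, if_neg]
    rintro ⟨rfl, rfl⟩
    exact hβ hγ
  | zero => simp
  | add _ _ _ _ h₁ h₂ => simp [h₁, h₂]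
  | smul _ _ _ h => simp [h]

lemma IsMarkedSetV.coeff_monomial_smul (hPB : ∀ k, IsPommaretBasis (P k) (J k))
    (hG : IsMarkedSetV d J P g) {α δ α' δ' : Exp n} {k l : κ} (hα : α ∈ P k)
    (hδ : multExp α δ) (hα' : α' ∈ P l) (hδ' : multExp α' δ') (hlex : ¬ lexLt δ' δ) :
    ((monomial δ (1 : A) • g α k) l).coeff (α' + δ')
      = if l = k ∧ α' = α ∧ δ' = δ then 1 else 0 := by
  have htail : ((monomial δ (1 : A) • (g α k - termV A α k)) l).coeff (α' + δ') = 0 :=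
    notMem_support_iff.mp fun h => hlex (hG.lexLt_of_mem_support_tail hPB hα hα' hδ' h)
  rw [monomial_smul_eq_termV_add_tail, Pi.add_apply, coeff_add, htail, add_zero, coeff_termV]
  refine if_congr ⟨fun ⟨hlk, h⟩ => ?_, fun ⟨hlk, hα'α, hδ'δ⟩ => ⟨hlk, by rw [hα'α, hδ'δ, add_comm]⟩⟩
    rfl rfl
  subst hlk
  obtain rfl : α' = α := (hPB l).2 _ α' hα' α hα ⟨δ', hδ', rfl⟩ ⟨δ, hδ, by rw [← h, add_comm]⟩
  exact ⟨rfl, rfl, add_left_cancel (h.symm.trans (add_comm δ _))⟩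

lemma span_GSdeg_inf_span_NUTermsDeg (hPB : ∀ k, IsPommaretBasis (P k) (J k))
    (hG : IsMarkedSetV d J P g) :
    Submodule.span A (GSdeg d P g s) ⊓ Submodule.span A (NUTermsDeg A d J s) = ⊥ := by
  refine eq_bot_iff.mpr fun x hx => ?_
  obtain ⟨hxG, hxN⟩ := Submodule.mem_inf.mp hx
  rw [GSdeg_eq_image, Finsupp.mem_span_image_iff_linearCombination] at hxG
  obtain ⟨c, hc, rfl⟩ := hxG
  rw [Finsupp.mem_supported] at hc
  rw [Submodule.mem_bot]
  suffices c = 0 by rw [this, map_zero]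
  by_contra hc0
  obtain ⟨t, ht, hmax⟩ := c.support.exists_max_image (fun t => toColex t.2.2)
    (Finsupp.support_nonempty_iff.mpr hc0)
  obtain ⟨hα, hδ, -⟩ := hc ht
  have hcoeff : (Finsupp.linearCombination A
      (fun t : κ × Exp n × Exp n => monomial t.2.2 (1 : A) • g t.2.1 t.1) c t.1).coeff
        (t.2.1 + t.2.2) = c t := by
    rw [Finsupp.linearCombination_apply, Finsupp.sum, Finset.sum_apply, coeff_sum,
      Finset.sum_eq_single t]
    · rw [Pi.smul_apply, coeff_smul, hG.coeff_monomial_smul hPB hα hδ hα hδ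
        fun h => lt_irrefl _ (lexLt_iff_toColex_lt.mp h)]
      simp
    · intro u hu hne
      obtain ⟨hαu, hδu, -⟩ := hc hu
      rw [Pi.smul_apply, coeff_smul, hG.coeff_monomial_smul hPB hαu hδu hα hδ
        (by rw [lexLt_iff_toColex_lt, not_lt]; exact hmax u hu), if_neg, smul_zero]
      rintro ⟨h₁, h₂, h₃⟩
      exact hne (Prod.ext h₁.symm (Prod.ext h₂.symm h₃.symm))
    · exact fun h => absurd ht h
  have hcone : t.2.1 + t.2.2 ∈ J t.1 := ((hPB t.1).1 _).mpr ⟨_, hα, _, hδ, rfl⟩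
  exact Finsupp.mem_support_iff.mp ht (hcoeff ▸ coeff_eq_zero_of_mem_span_NUTermsDeg hxN hcone)

end Decomposition

theorem statement5_general {n : ℕ} {κ : Type*} [Fintype κ] [DecidableEq κ]
    {A : Type*} [CommRing A]
    (d : κ → ℤ) (J : κ → Set (Exp n)) (P : κ → Finset (Exp n))
    (hQS : ∀ k, IsMonomialIdeal (J k) ∧ IsPommaretBasis (P k) (J k))
    (gb : Exp n → κ → (κ → MvPolynomial (Fin (n+1)) A))
    (hG : IsMarkedSetV d J P gb) :
    ∀ s : ℤ,
      homogCompV A d s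
        = Submodule.span A (GSdeg d P gb s) ⊔ Submodule.span A (NUTermsDeg A d J s) ∧
      Submodule.span A (GSdeg d P gb s) ⊓ Submodule.span A (NUTermsDeg A d J s) = ⊥ := by
  intro s
  have hPB k := (hQS k).2
  exact ⟨le_antisymm (homogCompV_le_span_GSdeg_sup hPB hG) (span_GSdeg_sup_span_NUTermsDeg_le hG),
    span_GSdeg_inf_span_NUTermsDeg hPB hG⟩

/-- Theorem `markedSetChar` (ii): `(S^m_d)_s = ⟨G^(s)⟩^A ⊕ ⟨N(U)_s⟩^A`. -/
theorem statement5 {n : ℕ} {κ : Type*} [Fintype κ] [DecidableEq κ] (hm : Nonempty κ)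
    {A : Type*} [CommRing A] [IsNoetherianRing A]
    (d : κ → ℤ) (J : κ → Set (Exp n)) (P : κ → Finset (Exp n))
    (hQS : ∀ k, IsMonomialIdeal (J k) ∧ IsPommaretBasis (P k) (J k))
    (gb : Exp n → κ → (κ → MvPolynomial (Fin (n+1)) A))
    (hG : IsMarkedSetV d J P gb) :
    ∀ s : ℤ,
      homogCompV A d s
        = Submodule.span A (GSdeg d P gb s) ⊔ Submodule.span A (NUTermsDeg A d J s) ∧
      Submodule.span A (GSdeg d P gb s) ⊓ Submodule.span A (NUTermsDeg A d J s) = ⊥ :=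
  statement5_general d J P hQS gb hG

end MB
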